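/- Let p, q be integers with 1 ≤ p < q and let α ∈ ℤ. Then there exists a geodesic word representing a^α in BS(p,q) of the form t^k a^{α_0} t⁻¹ a^{γ_1} t⁻¹ ⋯ t⁻¹ a^{γ_k} (all letters t at the front), and there also exists a geodesic word representing a^α of the form a^{γ_k} t ⋯ a^{γ_1} t a^{α_0} (t⁻¹)^k (all letters t⁻¹ at the end), for suitable k ≥ 0 and integers α_0, γ_1, …, γ_k. -/

import Mathlib

inductive Letter : Type
  | a | A | t | T
  deriving DecidableEq

def bsRel (p q : ℤ) : Set (FreeGroup Bool) :=
  {FreeGroup.of true * (FreeGroup.of false) ^ p * (FreeGroup.of true)⁻¹ * (FreeGroup.of false) ^ (-q)}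

abbrev BS (p q : ℤ) := PresentedGroup (bsRel p q)

def evalLetter (p q : ℤ) : Letter → BS p q
  | .a => PresentedGroup.of false
  | .A => (PresentedGroup.of false)⁻¹
  | .t => PresentedGroup.of true
  | .T => (PresentedGroup.of true)⁻¹

def eval (p q : ℤ) (w : List Letter) : BS p q := (w.map (evalLetter p q)).prod

def aPow (α : ℤ) : List Letter :=
  if 0 ≤ α then List.replicate α.toNat Letter.a else List.replicate (-α).toNat Letter.A

def Geodesic (p q : ℤ) (w : List Letter) : Prop :=
  ∀ v : List Letter, eval p q v = eval p q w → w.length ≤ v.length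

/-- Ranking of letters in the order `t < T < a < A`. -/
def letterIdx : Letter → ℕ
  | .t => 0
  | .T => 1
  | .a => 2
  | .A => 3

/-- Length-lexicographical strict order on words, with letters ordered `t < T < a < A`. -/
def llLt (u v : List Letter) : Prop :=
  u.length < v.length ∨
    (u.length = v.length ∧ List.Lex (· < ·) (u.map letterIdx) (v.map letterIdx))

/-- `IsLlnf p q v w` : `v` is the length-lexicographical normal form of `w`,
i.e. `v` represents the same element as `w` and no word representing this element
precedes `v` in the length-lexicographical order. -/
def IsLlnf (p q : ℤ) (v w : List Letter) : Prop :=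
  eval p q v = eval p q w ∧ ∀ u : List Letter, eval p q u = eval p q w → ¬ llLt u v

/-- A word contains no factors `a a⁻¹` or `a⁻¹ a`. -/
def Reduced (w : List Letter) : Prop :=
  (∀ u v : List Letter, w ≠ u ++ [Letter.a, Letter.A] ++ v) ∧
  (∀ u v : List Letter, w ≠ u ++ [Letter.A, Letter.a] ++ v)

/-- A word is Britton-reduced: it has no factors `a a⁻¹`, `a⁻¹ a`,
`t a^{pμ} t⁻¹` or `t⁻¹ a^{qμ} t` (with `μ ∈ ℤ`). -/
def BrittonReduced (p q : ℤ) (w : List Letter) : Prop :=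
  Reduced w ∧
  (∀ u v : List Letter, ∀ μ : ℤ, w ≠ u ++ [Letter.t] ++ aPow (p * μ) ++ [Letter.T] ++ v) ∧
  (∀ u v : List Letter, ∀ μ : ℤ, w ≠ u ++ [Letter.T] ++ aPow (q * μ) ++ [Letter.t] ++ v)

/-- The t-sequence of a word: its subsequence of letters from `{t, t⁻¹}`. -/
def tSeq (w : List Letter) : List Letter :=
  w.filter (fun c => c == Letter.t || c == Letter.T)

/-- The geodesic length of a group element: the least length of a word representing it. -/
noncomputable def geodesicLength (p q : ℤ) (g : BS p q) : ℕ :=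
  sInf {n : ℕ | ∃ w : List Letter, eval p q w = g ∧ w.length = n}

/-- A valley: every prefix has height `≤ 0` and the total height is `0`,
where the height of a prefix is (number of `t`'s) − (number of `t⁻¹`'s). -/
def IsValley (w : List Letter) : Prop :=
  (∀ u v : List Letter, w = u ++ v → u.count Letter.t ≤ u.count Letter.T) ∧
  w.count Letter.t = w.count Letter.T

/-!
Call `t^k a^α₀ t⁻¹ a^γ₁ ⋯ t⁻¹ a^γₖ` a mountain word. The exponents `c` for which `a^c` has a
mountain word of length `≤ n` are closed under addition (add the digits level by level), under
`p b ↦ q b` at the price of one more level, i.e. two letters, and, since `|p| ≤ |q|`, under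
`q m ↦ p m` for free. Cut an arbitrary word for `a^α` into syllables `t^±1 a^c`. By Britton's
lemma, applied in the HNN model of `BS(p,q)`, it contains a pinch `t a^(p b) t⁻¹` or
`t⁻¹ a^(q m) t`, and the closure properties absorb the pinch without increasing the cost.
Hence a shortest word for `a^α` is no shorter than some mountain word, which is therefore
geodesic. Inverting words gives the second form.
-/

def Letter.inv : Letter → Letter
  | .a => .A
  | .A => .a
  | .t => .T
  | .T => .t

namespace BaumslagSolitar

variable {p q : ℤ}

def genA : BS p q := PresentedGroup.of false

def genT : BS p q := PresentedGroup.of true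

theorem genT_mul_genA_zpow_mul_genT_inv (b : ℤ) :
    genT * genA ^ (p * b) * genT⁻¹ = (genA : BS p q) ^ (q * b) := by
  have hrel : genT * genA ^ p * genT⁻¹ * (genA ^ q)⁻¹ = (1 : BS p q) := by
    simpa [genA, genT, PresentedGroup.of, zpow_neg] using
      PresentedGroup.one_of_mem (rels := bsRel p q) rfl
  rw [zpow_mul, zpow_mul, ← conj_zpow, mul_inv_eq_one.mp hrel]

@[simp]
theorem eval_nil : eval p q [] = 1 := rfl

@[simp]
theorem eval_cons (c : Letter) (w : List Letter) :
    eval p q (c :: w) = evalLetter p q c * eval p q w := by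
  simp [eval]

@[simp]
theorem eval_append (u v : List Letter) : eval p q (u ++ v) = eval p q u * eval p q v := by
  simp [eval]

theorem aPow_natCast (n : ℕ) : aPow n = List.replicate n Letter.a := by
  simp [aPow]

theorem aPow_neg_natCast (n : ℕ) : aPow (-n) = List.replicate n Letter.A := by
  rcases n.eq_zero_or_pos with rfl | hn <;> simp [aPow]

@[simp]
theorem eval_aPow (α : ℤ) : eval p q (aPow α) = genA ^ α := by
  obtain ⟨n, rfl | rfl⟩ := Int.eq_nat_or_neg α <;>
    simp [aPow_natCast, aPow_neg_natCast, eval, evalLetter, genA]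

@[simp]
theorem length_aPow (α : ℤ) : (aPow α).length = α.natAbs := by
  obtain ⟨n, rfl | rfl⟩ := Int.eq_nat_or_neg α <;> simp [aPow_natCast, aPow_neg_natCast]

theorem exists_geodesic (w : List Letter) : ∃ v, eval p q v = eval p q w ∧ Geodesic p q v := by
  classical
  have hex : ∃ n, ∃ v : List Letter, eval p q v = eval p q w ∧ v.length = n := ⟨_, w, rfl, rfl⟩
  obtain ⟨v, hv, hlen⟩ := Nat.find_spec hex
  exact ⟨v, hv, fun u hu => hlen ▸ Nat.find_min' hex ⟨u, hu.trans hv, rfl⟩⟩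

theorem _root_.Geodesic.of_length_le {w v : List Letter} (hw : Geodesic p q w)
    (heval : eval p q v = eval p q w) (hlen : v.length ≤ w.length) : Geodesic p q v :=
  fun u hu => hlen.trans (hw u (hu.trans heval))

def invWord (w : List Letter) : List Letter := (w.map Letter.inv).reverse

@[simp]
theorem invWord_nil : invWord [] = [] := rfl

@[simp]
theorem invWord_cons (c : Letter) (w : List Letter) :
    invWord (c :: w) = invWord w ++ [c.inv] := by
  simp [invWord]

@[simp]
theorem invWord_append (u v : List Letter) : invWord (u ++ v) = invWord v ++ invWord u := by
  simp [invWord]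

@[simp]
theorem length_invWord (w : List Letter) : (invWord w).length = w.length := by
  simp [invWord]

@[simp]
theorem invWord_aPow (α : ℤ) : invWord (aPow α) = aPow (-α) := by
  obtain ⟨n, rfl | rfl⟩ := Int.eq_nat_or_neg α <;>
    simp [aPow_natCast, aPow_neg_natCast, invWord, Letter.inv]

@[simp]
theorem eval_invWord (w : List Letter) : eval p q (invWord w) = (eval p q w)⁻¹ := by
  induction w with
  | nil => simp
  | cons c w ih => cases c <;> simp [ih, Letter.inv, evalLetter]

theorem _root_.Geodesic.invWord {w : List Letter} (hw : Geodesic p q w) :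
    Geodesic p q (invWord w) := by
  intro v hv
  simpa using hw (BaumslagSolitar.invWord v) (by simp [hv])

variable (p q) in
/-- The digits are listed from the outermost level of the mountain inwards. -/
def MountainRepr (α0 : ℤ) : List ℤ → ℤ → Prop
  | [], α => α = α0
  | g :: γ, α => ∃ b, MountainRepr α0 γ (p * b) ∧ α = q * b + g

def mountainWord (α0 : ℤ) : List ℤ → List Letter
  | [] => aPow α0
  | g :: γ => Letter.t :: (mountainWord α0 γ ++ Letter.T :: aPow g)

@[simp]
theorem length_mountainWord_nil (α0 : ℤ) : (mountainWord α0 []).length = α0.natAbs := by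
  simp [mountainWord]

@[simp]
theorem length_mountainWord_cons (α0 g : ℤ) (γ : List ℤ) :
    (mountainWord α0 (g :: γ)).length = (mountainWord α0 γ).length + g.natAbs + 2 := by
  simp only [mountainWord, List.length_cons, List.length_append, length_aPow]
  omega

theorem eval_mountainWord {α0 α : ℤ} {γ : List ℤ} (h : MountainRepr p q α0 γ α) :
    eval p q (mountainWord α0 γ) = genA ^ α := by
  induction γ generalizing α with
  | nil => simp [mountainWord, show α = α0 from h]
  | cons g γ ih =>
    obtain ⟨b, hγ, rfl⟩ := h
    simp only [mountainWord, eval_cons, eval_append, ih hγ, eval_aPow]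
    rw [zpow_add, ← genT_mul_genA_zpow_mul_genT_inv]
    simp [evalLetter, genT, mul_assoc]

theorem mountainWord_eq (α0 : ℤ) (γ : List ℤ) :
    mountainWord α0 γ = List.replicate γ.length Letter.t ++ aPow α0 ++
      (γ.reverse.map fun g => Letter.T :: aPow g).flatten := by
  induction γ with
  | nil => simp [mountainWord]
  | cons g γ ih => simp [mountainWord, ih, List.replicate_succ]

theorem invWord_mountainWord (α0 : ℤ) (γ : List ℤ) :
    invWord (mountainWord α0 γ) = (γ.map fun g => aPow (-g) ++ [Letter.t]).flatten ++
      aPow (-α0) ++ List.replicate γ.length Letter.T := by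
  induction γ with
  | nil => simp [mountainWord]
  | cons g γ ih => simp [mountainWord, ih, List.replicate_succ', Letter.inv]

variable (p q) in
def HasMountainLE (c : ℤ) (n : ℕ) : Prop :=
  ∃ α0 γ, MountainRepr p q α0 γ c ∧ (mountainWord α0 γ).length ≤ n

theorem HasMountainLE.mono {c : ℤ} {n m : ℕ} (h : HasMountainLE p q c n) (hnm : n ≤ m) :
    HasMountainLE p q c m :=
  let ⟨α0, γ, hγ, hn⟩ := h
  ⟨α0, γ, hγ, hn.trans hnm⟩

theorem HasMountainLE.natAbs (c : ℤ) : HasMountainLE p q c c.natAbs :=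
  ⟨c, [], rfl, by simp⟩

theorem HasMountainLE.lift {b : ℤ} {n : ℕ} (h : HasMountainLE p q (p * b) n) :
    HasMountainLE p q (q * b) (n + 2) :=
  let ⟨α0, γ, hγ, hn⟩ := h
  ⟨α0, 0 :: γ, ⟨b, hγ, by ring⟩, by simpa using hn⟩

theorem MountainRepr.add_outer {α0 c g : ℤ} {γ : List ℤ} (h : MountainRepr p q α0 (g :: γ) c)
    (d : ℤ) : MountainRepr p q α0 ((g + d) :: γ) (c + d) :=
  let ⟨b, hγ, hc⟩ := h
  ⟨b, hγ, by rw [hc]; ring⟩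

/-- Add the outermost digits, and recursively the inner mountains, whose values are
multiples of `p`; a plain power of `a` is absorbed by the outermost digit of the other. -/
theorem MountainRepr.hasMountainLE_add {α0 β0 c d : ℤ} {γ δ : List ℤ}
    (hc : MountainRepr p q α0 γ c) (hd : MountainRepr p q β0 δ d) :
    HasMountainLE p q (c + d) ((mountainWord α0 γ).length + (mountainWord β0 δ).length) := by
  induction γ generalizing c β0 δ d with
  | nil =>
    obtain rfl : c = α0 := hc
    cases δ with
    | nil =>
      obtain rfl : d = β0 := hd
      exact ⟨c + d, [], rfl, by simpa using Int.natAbs_add_le c d⟩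
    | cons h δ =>
      refine ⟨β0, (h + c) :: δ, by simpa [add_comm] using hd.add_outer c, ?_⟩
      simp only [length_mountainWord_cons, length_mountainWord_nil]
      have := Int.natAbs_add_le h c
      omega
  | cons g γ ih =>
    cases δ with
    | nil =>
      obtain rfl : d = β0 := hd
      refine ⟨α0, (g + d) :: γ, hc.add_outer d, ?_⟩
      simp only [length_mountainWord_cons, length_mountainWord_nil]
      have := Int.natAbs_add_le g d
      omega
    | cons h δ =>
      obtain ⟨b, hγ, rfl⟩ := hc
      obtain ⟨b', hδ, rfl⟩ := hd
      obtain ⟨ε0, ε, hε, hlen⟩ := ih hγ hδ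
      refine ⟨ε0, (g + h) :: ε, ⟨b + b', by rwa [mul_add], by ring⟩, ?_⟩
      simp only [length_mountainWord_cons] at hlen ⊢
      have := Int.natAbs_add_le g h
      omega

theorem HasMountainLE.add {c d : ℤ} {n m : ℕ} (hc : HasMountainLE p q c n)
    (hd : HasMountainLE p q d m) : HasMountainLE p q (c + d) (n + m) :=
  let ⟨_, _, hγ, hn⟩ := hc
  let ⟨_, _, hδ, hm⟩ := hd
  (hγ.hasMountainLE_add hδ).mono (Nat.add_le_add hn hm)

/-- Write `q * m = q * b + g` with the outermost digit `g = q * (m - b)`; then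
`p * m = p * b + p * (m - b)`, and `|p * (m - b)| ≤ |g|`. -/
theorem HasMountainLE.shrink (hpq : p.natAbs ≤ q.natAbs) {m : ℤ} {n : ℕ}
    (h : HasMountainLE p q (q * m) n) : HasMountainLE p q (p * m) n := by
  have hmul (k : ℤ) : (p * k).natAbs ≤ (q * k).natAbs := by
    simpa only [Int.natAbs_mul] using Nat.mul_le_mul_right _ hpq
  obtain ⟨α0, γ, hγ, hn⟩ := h
  cases γ with
  | nil =>
    obtain rfl : q * m = α0 := hγ
    exact (natAbs _).mono ((hmul m).trans (by simpa using hn))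
  | cons g γ =>
    obtain ⟨b, hγ, hg⟩ := hγ
    obtain rfl : g = q * (m - b) := by linear_combination -hg
    have hinner : HasMountainLE p q (p * b) (mountainWord α0 γ).length := ⟨α0, γ, hγ, le_rfl⟩
    have hsum := hinner.add (natAbs (p * (m - b)))
    rw [← mul_add, add_sub_cancel] at hsum
    refine hsum.mono ?_
    simp only [length_mountainWord_cons] at hn
    have := hmul (m - b)
    omega

variable (p q) in
structure Syllable where
  sign : ℤˣ
  exp : ℤ
  cost : ℕ
  hasMountainLE : HasMountainLE p q exp cost

namespace Syllable

def val (e : Syllable p q) : BS p q := genT ^ (e.sign : ℤ) * genA ^ e.exp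

def absorb (e : Syllable p q) {v : ℤ} {n : ℕ} (hv : HasMountainLE p q v n) : Syllable p q :=
  ⟨e.sign, e.exp + v, e.cost + n, e.hasMountainLE.add hv⟩

@[simp]
theorem val_absorb (e : Syllable p q) {v : ℤ} {n : ℕ} (hv : HasMountainLE p q v n) :
    (e.absorb hv).val = e.val * genA ^ v := by
  simp [absorb, val, zpow_add, mul_assoc]

theorem exists_val_mul_val_eq (hpq : p.natAbs ≤ q.natAbs) {e f : Syllable p q}
    (hsign : f.sign = -e.sign) (hdvd : e.sign = 1 ∧ p ∣ e.exp ∨ e.sign = -1 ∧ q ∣ e.exp) :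
    ∃ v, e.val * f.val = genA ^ v ∧ HasMountainLE p q v (e.cost + f.cost + 2) := by
  obtain ⟨u, g, n, hg⟩ := e
  obtain ⟨u', g', n', hg'⟩ := f
  dsimp only at hsign hdvd ⊢
  subst hsign
  rcases hdvd with ⟨rfl, b, rfl⟩ | ⟨rfl, m, rfl⟩
  · refine ⟨q * b + g', ?_, (hg.lift.add hg').mono (by omega)⟩
    rw [val, val, zpow_add, ← genT_mul_genA_zpow_mul_genT_inv]
    simp [mul_assoc]
  · refine ⟨p * m + g', ?_, ((hg.shrink hpq).add hg').mono (by omega)⟩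
    rw [val, val, zpow_add, ← genT_mul_genA_zpow_mul_genT_inv]
    simp [mul_assoc]

end Syllable

variable (p q) in
def syllables : List Letter → ℤ × List (Syllable p q)
  | [] => (0, [])
  | .a :: w => ((syllables w).1 + 1, (syllables w).2)
  | .A :: w => ((syllables w).1 - 1, (syllables w).2)
  | .t :: w => (0, ⟨1, (syllables w).1, _, .natAbs _⟩ :: (syllables w).2)
  | .T :: w => (0, ⟨-1, (syllables w).1, _, .natAbs _⟩ :: (syllables w).2)

theorem eval_eq_syllables (w : List Letter) :
    eval p q w = genA ^ (syllables p q w).1 * ((syllables p q w).2.map Syllable.val).prod := by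
  induction w with
  | nil => simp [syllables]
  | cons c w ih =>
    cases c <;> simp [syllables, ih, evalLetter, genA, genT, Syllable.val, add_comm _ (1 : ℤ),
      sub_eq_neg_add, zpow_add, mul_assoc]

theorem syllables_cost_le (w : List Letter) :
    (syllables p q w).1.natAbs + ((syllables p q w).2.map fun e => e.cost + 1).sum ≤
      w.length := by
  induction w with
  | nil => simp [syllables]
  | cons c w ih =>
    cases c <;> simp only [syllables, List.map_cons, List.sum_cons, List.length_cons] <;> omega

section HNNModel

open HNNExtension Multiplicative

abbrev powHom (n : ℤ) : Multiplicative ℤ →* Multiplicative ℤ := zpowGroupHom n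

theorem ofAdd_mem_range_powHom_iff {n c : ℤ} : ofAdd c ∈ (powHom n).range ↔ n ∣ c := by
  constructor
  · rintro ⟨x, hx⟩
    exact ⟨x.toAdd, by simpa [mul_comm] using congrArg toAdd hx.symm⟩
  · rintro ⟨b, rfl⟩
    exact ⟨ofAdd b, (ofAdd_zsmul n b).symm⟩

variable (hp : p ≠ 0) (hq : q ≠ 0)

/-- The isomorphism `pℤ ≃ qℤ`, `p * b ↦ q * b`; its HNN extension of `ℤ` is `BS p q`. -/
noncomputable def multiplesEquiv : (powHom p).range ≃* (powHom q).range :=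
  (MonoidHom.ofInjective (zpow_left_injective hp)).symm.trans
    (MonoidHom.ofInjective (zpow_left_injective hq))

theorem multiplesEquiv_apply (x : Multiplicative ℤ) :
    (multiplesEquiv hp hq ⟨x ^ p, x, rfl⟩ : Multiplicative ℤ) = x ^ q := by
  have hx : (MonoidHom.ofInjective (zpow_left_injective hp)).symm ⟨x ^ p, x, rfl⟩ = x :=
    (MulEquiv.symm_apply_eq _).mpr <|
      Subtype.ext (MonoidHom.ofInjective_apply (f := powHom p) _).symm
  rw [multiplesEquiv, MulEquiv.trans_apply, hx]
  exact MonoidHom.ofInjective_apply (f := powHom q) _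

abbrev HNNModel := HNNExtension (Multiplicative ℤ) _ _ (multiplesEquiv hp hq)

noncomputable def toHNNModel : BS p q →* HNNModel hp hq :=
  PresentedGroup.toGroup (f := fun x => bif x then t else of (ofAdd 1)) <| by
    rintro _ rfl
    have hconj : t * of (ofAdd 1 ^ p) = of (ofAdd 1 ^ q) * (t : HNNModel hp hq) :=
      (t_mul_of (⟨ofAdd 1 ^ p, ofAdd 1, rfl⟩ : (powHom p).range)).trans
        (by rw [multiplesEquiv_apply])
    simp only [map_mul, map_zpow, map_inv, FreeGroup.lift_apply_of, cond_true, cond_false]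
    rw [zpow_neg, mul_inv_eq_one, mul_inv_eq_iff_eq_mul, ← map_zpow, hconj, map_zpow]

@[simp]
theorem toHNNModel_genA_zpow (c : ℤ) :
    toHNNModel hp hq ((genA : BS p q) ^ c) = of (ofAdd c) := by
  rw [map_zpow, genA, toHNNModel, PresentedGroup.toGroup.of, cond_false, ← map_zpow,
    ← ofAdd_zsmul, smul_eq_mul, mul_one]

@[simp]
theorem toHNNModel_genT : toHNNModel hp hq (genT : BS p q) = t := PresentedGroup.toGroup.of _

include hp hq in
theorem genA_zpow_injective : Function.Injective fun c : ℤ => (genA : BS p q) ^ c := by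
  intro c d h
  have h' : (of (ofAdd c) : HNNModel hp hq) = of (ofAdd d) := by
    simpa using congrArg (toHNNModel hp hq) h
  exact ofAdd.injective (of_injective (multiplesEquiv hp hq) h')

include hp hq in
/-- Britton's lemma, read in the HNN model. -/
theorem exists_pinch {L : List (Syllable p q)} (hL : L ≠ []) {α : ℤ}
    (h : (L.map Syllable.val).prod = genA ^ α) :
    ∃ L₁ e f L₂, L = L₁ ++ e :: f :: L₂ ∧ f.sign = -e.sign ∧
      (e.sign = 1 ∧ p ∣ e.exp ∨ e.sign = -1 ∧ q ∣ e.exp) := by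
  by_contra! hno
  let w : NormalWord.ReducedWord (Multiplicative ℤ) (powHom p).range (powHom q).range :=
    { head := 1
      toList := L.map fun e => (e.sign, ofAdd e.exp)
      chain := by
        rw [List.isChain_map, List.isChain_iff_forall_rel_of_append_cons_cons]
        intro e f L₁ L₂ hsplit hmem
        by_contra hne
        have hpinch := hno L₁ e f L₂ hsplit (Int.units_ne_iff_eq_neg.mp (Ne.symm hne))
        rcases Int.units_eq_one_or e.sign with he | he <;> rw [he] at hmem
        · exact hpinch.1 he (ofAdd_mem_range_powHom_iff.mp hmem)
        · exact hpinch.2 he (ofAdd_mem_range_powHom_iff.mp hmem) }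
  have hprod : w.prod (multiplesEquiv hp hq) = toHNNModel hp hq (genA ^ α) := by
    rw [← h, map_list_prod]
    simp [w, NormalWord.ReducedWord.prod, Function.comp_def, Syllable.val]
  have hnil := ReducedWord.toList_eq_nil_of_mem_of_range _ w
    ⟨ofAdd α, by rw [hprod, toHNNModel_genA_zpow]⟩
  exact hL (List.map_eq_nil_iff.mp hnil)

include hp hq in
/-- Collapse a pinch and merge the resulting power of `a` into the preceding syllable. -/
theorem hasMountainLE_of_prod_val_eq (hpq : p.natAbs ≤ q.natAbs) (L : List (Syllable p q))
    {α : ℤ} (h : (L.map Syllable.val).prod = genA ^ α) :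
    HasMountainLE p q α (L.map fun e => e.cost + 1).sum := by
  rcases eq_or_ne L [] with rfl | hL
  · obtain rfl : α = 0 := genA_zpow_injective hp hq (by simpa using h.symm)
    exact HasMountainLE.natAbs 0
  obtain ⟨L₁, e, f, L₂, rfl, hsign, hdvd⟩ := exists_pinch hp hq hL h
  obtain ⟨v, hv, hmv⟩ := Syllable.exists_val_mul_val_eq hpq hsign hdvd
  rcases List.eq_nil_or_concat L₁ with rfl | ⟨L₁, g, rfl⟩
  · have hrest : (L₂.map Syllable.val).prod = genA ^ (α - v) := by
      simp only [List.nil_append, List.map_cons, List.prod_cons, ← mul_assoc, hv] at h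
      rw [sub_eq_neg_add, zpow_add, zpow_neg, ← h, inv_mul_cancel_left]
    have hsum := hmv.add (hasMountainLE_of_prod_val_eq hpq L₂ hrest)
    rw [add_sub_cancel] at hsum
    refine hsum.mono ?_
    simp only [List.nil_append, List.map_cons, List.sum_cons]
    omega
  · have hrest : ((L₁ ++ g.absorb hmv :: L₂).map Syllable.val).prod = genA ^ α := by
      rw [← h]
      simp [← hv, mul_assoc]
    refine (hasMountainLE_of_prod_val_eq hpq _ hrest).mono ?_
    simp only [Syllable.absorb, List.concat_eq_append, List.append_assoc, List.cons_append,
      List.nil_append, List.map_append, List.map_cons, List.sum_append, List.sum_cons]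
    omega
termination_by L.length

include hp hq in
theorem hasMountainLE_of_eval_eq (hpq : p.natAbs ≤ q.natAbs) (w : List Letter) {α : ℤ}
    (h : eval p q w = genA ^ α) : HasMountainLE p q α w.length := by
  set c := (syllables p q w).1
  have hprod : ((syllables p q w).2.map Syllable.val).prod = genA ^ (α - c) := by
    rw [sub_eq_neg_add, zpow_add, zpow_neg, ← h, eval_eq_syllables, inv_mul_cancel_left]
  have hsum := (HasMountainLE.natAbs c).add (hasMountainLE_of_prod_val_eq hp hq hpq _ hprod)
  rw [add_sub_cancel] at hsum
  exact hsum.mono (syllables_cost_le w)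

include hp hq in
theorem exists_geodesic_mountainWord (hpq : p.natAbs ≤ q.natAbs) (α : ℤ) :
    ∃ α0 γ, MountainRepr p q α0 γ α ∧ Geodesic p q (mountainWord α0 γ) := by
  obtain ⟨w, hw, hgeo⟩ := exists_geodesic (p := p) (q := q) (aPow α)
  rw [eval_aPow] at hw
  obtain ⟨α0, γ, hrepr, hlen⟩ := hasMountainLE_of_eval_eq hp hq hpq w hw
  exact ⟨α0, γ, hrepr, hgeo.of_length_le (by rw [eval_mountainWord hrepr, hw]) hlen⟩

include hp hq in
theorem exists_geodesic_descending (hpq : p.natAbs ≤ q.natAbs) (α : ℤ) :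
    ∃ (k : ℕ) (α0 : ℤ) (γs : Fin k → ℤ),
      eval p q (List.replicate k Letter.t ++ aPow α0 ++
        (List.ofFn fun i : Fin k => Letter.T :: aPow (γs i)).flatten) = eval p q (aPow α) ∧
      Geodesic p q (List.replicate k Letter.t ++ aPow α0 ++
        (List.ofFn fun i : Fin k => Letter.T :: aPow (γs i)).flatten) := by
  obtain ⟨α0, γ, hrepr, hgeo⟩ := exists_geodesic_mountainWord hp hq hpq α
  refine ⟨γ.reverse.length, α0, fun i => γ.reverse[(i : ℕ)], ?_⟩
  rw [List.ofFn_getElem_eq_map γ.reverse (fun g => Letter.T :: aPow g), List.length_reverse,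
    ← mountainWord_eq, eval_mountainWord hrepr, eval_aPow]
  exact ⟨rfl, hgeo⟩

include hp hq in
theorem exists_geodesic_ascending (hpq : p.natAbs ≤ q.natAbs) (α : ℤ) :
    ∃ (k : ℕ) (α0 : ℤ) (γs : Fin k → ℤ),
      eval p q ((List.ofFn fun i : Fin k => aPow (γs i) ++ [Letter.t]).flatten ++ aPow α0 ++
        List.replicate k Letter.T) = eval p q (aPow α) ∧
      Geodesic p q ((List.ofFn fun i : Fin k => aPow (γs i) ++ [Letter.t]).flatten ++ aPow α0 ++
        List.replicate k Letter.T) := by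
  obtain ⟨α0, γ, hrepr, hgeo⟩ := exists_geodesic_mountainWord hp hq hpq (-α)
  refine ⟨γ.length, -α0, fun i => -γ[(i : ℕ)], ?_⟩
  rw [List.ofFn_getElem_eq_map γ (fun g => aPow (-g) ++ [Letter.t]), ← invWord_mountainWord,
    eval_invWord, eval_mountainWord hrepr, eval_aPow, zpow_neg, inv_inv]
  exact ⟨rfl, hgeo.invWord⟩

end HNNModel

end BaumslagSolitar

theorem horocyclic_geodesic_forms (p q α : ℤ) (hp : 1 ≤ p) (hpq : p < q) :
    (∃ (k : ℕ) (α0 : ℤ) (γs : Fin k → ℤ),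
      eval p q (List.replicate k Letter.t ++ aPow α0 ++
        (List.ofFn fun i : Fin k => Letter.T :: aPow (γs i)).flatten) = eval p q (aPow α) ∧
      Geodesic p q (List.replicate k Letter.t ++ aPow α0 ++
        (List.ofFn fun i : Fin k => Letter.T :: aPow (γs i)).flatten)) ∧
    (∃ (k : ℕ) (α0 : ℤ) (γs : Fin k → ℤ),
      eval p q ((List.ofFn fun i : Fin k => aPow (γs i) ++ [Letter.t]).flatten ++ aPow α0 ++
        List.replicate k Letter.T) = eval p q (aPow α) ∧
      Geodesic p q ((List.ofFn fun i : Fin k => aPow (γs i) ++ [Letter.t]).flatten ++ aPow α0 ++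
        List.replicate k Letter.T)) := by
  have hp0 : p ≠ 0 := by omega
  have hq0 : q ≠ 0 := by omega
  have hpq' : p.natAbs ≤ q.natAbs := by omega
  exact ⟨BaumslagSolitar.exists_geodesic_descending hp0 hq0 hpq' α,
    BaumslagSolitar.exists_geodesic_ascending hp0 hq0 hpq' α⟩
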